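/- arXiv:1604.05863 — 2 statements merged into one kernel-verified Lean document; each statement's English description precedes it below -/
import Mathlib

section
/- For every n ≥ 3 congruent to 1 modulo 6, there exists a disc triangulation contained in the triangular lattice (a convex hexagon with side lengths (k, k+2, k+1, k+1, k+1, k+2) where n = 6k+7) with n boundary vertices, all internal vertices of degree 6, and exactly ⌊(n+3)²/12⌋ vertices. -/
/-!
Take for the triangulation the lattice points of the hexagon `H_k` with sides
`k + 2, k + 1, k + 1, k + 1, k + 2, k`, joined by lattice edges, with all lattice triangles as
faces. In the triangular lattice the two triangles on an edge `pq` have apexes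
`p + ρ (q - p)` and `q + ρ (p - q)`, `ρ` the rotation by `60°`. Since `H_k` is convex, both
apexes lie in `H_k` unless `pq` is a boundary edge, where exactly the inner one does, and every
non-boundary point keeps its six lattice neighbours. Removing the `6k + 7` boundary points of
`H_{k+1}` leaves a translate of `H_k`, so `|H_k| = 3k² + 10k + 8 = ⌊(6k + 10)² / 12⌋`.
-/

open scoped Classical

/-- A combinatorial disc triangulation with `V` vertices and boundary a simple
cycle with `n` vertices (given as an `n`-periodic cyclic sequence `bd`):
all bounded faces are triangles, every boundary edge lies in exactly one face
and every other edge lies in exactly two faces. -/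
structure DiscTriangulation (V n : ℕ) where
  hn : 3 ≤ n
  hVn : n ≤ V
  G : SimpleGraph (Fin V)
  bd : ℕ → Fin V
  bd_periodic : ∀ i, bd (i + n) = bd i
  bd_inj : ∀ i < n, ∀ j < n, bd i = bd j → i = j
  bd_adj : ∀ i, G.Adj (bd i) (bd (i + 1))
  faces : Finset (Finset (Fin V))
  face_card : ∀ f ∈ faces, f.card = 3
  face_clique : ∀ f ∈ faces, ∀ u ∈ f, ∀ v ∈ f, u ≠ v → G.Adj u v
  bedge_one : ∀ u v : Fin V, G.Adj u v →
    (∃ i, ({bd i, bd (i + 1)} : Finset (Fin V)) = {u, v}) →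
    (faces.filter fun f => u ∈ f ∧ v ∈ f).card = 1
  iedge_two : ∀ u v : Fin V, G.Adj u v →
    (¬ ∃ i, ({bd i, bd (i + 1)} : Finset (Fin V)) = {u, v}) →
    (faces.filter fun f => u ∈ f ∧ v ∈ f).card = 2

namespace DiscTriangulation

variable {V n : ℕ} (T : DiscTriangulation V n)

/-- The set of boundary vertices. -/
noncomputable def boundarySet : Finset (Fin V) := (Finset.range n).image T.bd

/-- `u v` span an edge of the boundary cycle. -/
def IsBoundaryEdge (u v : Fin V) : Prop :=
  ∃ i, ({T.bd i, T.bd (i + 1)} : Finset (Fin V)) = {u, v}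

/-- A vertex is internal if it is not on the boundary cycle. -/
def Internal (v : Fin V) : Prop := v ∉ T.boundarySet

/-- The degree of a vertex. -/
noncomputable def degree (v : Fin V) : ℕ := {u | T.G.Adj v u}.ncard

/-- The number of edges. -/
noncomputable def edgeCount : ℕ := T.G.edgeSet.ncard

/-- The number of (bounded) faces. -/
noncomputable def faceCount : ℕ := T.faces.card

/-- The number of pairs `(e, v)` where `e` is an internal edge and `v` is an
endpoint of `e` lying on the boundary (so an internal edge with both endpoints
on the boundary is counted twice); counted here as ordered pairs `(v, u)`
with `v` on the boundary. -/
noncomputable def m : ℕ :=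
  {p : Fin V × Fin V |
    T.G.Adj p.1 p.2 ∧ p.1 ∈ T.boundarySet ∧ ¬ T.IsBoundaryEdge p.1 p.2}.ncard

/-- The sum of degrees of internal vertices, i.e. `σ · (V - n)` where `σ` is
the average internal degree. -/
noncomputable def internalDegreeSum : ℕ :=
  ∑ v ∈ Finset.univ.filter (fun v => T.Internal v), T.degree v

/-- The faces surviving after stripping the boundary layer: those with all
three vertices internal. -/
noncomputable def strippedFaces : Finset (Finset (Fin V)) :=
  T.faces.filter fun f => ∀ v ∈ f, T.Internal v

/-- The total boundary length `n'` of the stripped triangulation, with bridges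
counted twice: each edge between internal vertices contributes `2 - c`, where
`c ≤ 2` is the number of stripped faces containing it. -/
noncomputable def strippedBoundary : ℕ :=
  ∑ e ∈ Finset.univ.filter
      (fun e : Finset (Fin V) => e.card = 2 ∧ (∀ v ∈ e, T.Internal v) ∧
        ∀ u ∈ e, ∀ v ∈ e, u ≠ v → T.G.Adj u v),
    (2 - (T.strippedFaces.filter fun f => e ⊆ f).card)

/-- Number of boundary vertices of a face. -/
noncomputable def bvCount (f : Finset (Fin V)) : ℕ := (f ∩ T.boundarySet).card

/-- Number of boundary edges of a face. -/
noncomputable def beCount (f : Finset (Fin V)) : ℕ :=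
  ((Finset.range n).filter fun i => T.bd i ∈ f ∧ T.bd (i + 1) ∈ f).card

/-- `α`: faces with a boundary edge and an internal vertex. -/
noncomputable def alphaCount : ℕ :=
  (T.faces.filter fun f => T.bvCount f = 2 ∧ T.beCount f = 1).card

/-- `γ`: faces with two boundary vertices, one internal vertex, and no
boundary edge. -/
noncomputable def gammaCount : ℕ :=
  (T.faces.filter fun f => T.bvCount f = 2 ∧ T.beCount f = 0).card

/-- `β i`: faces with three boundary vertices and `i` boundary edges. -/
noncomputable def betaCount (i : ℕ) : ℕ :=
  (T.faces.filter fun f => T.bvCount f = 3 ∧ T.beCount f = i).card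

end DiscTriangulation

/-- The triangular lattice: the 6-regular triangulation of the plane, with
vertex set `ℤ × ℤ` and edges given by the difference vectors
`(1,0)`, `(0,1)`, `(1,1)` and their negatives. -/
def TriLattice : SimpleGraph (ℤ × ℤ) :=
  SimpleGraph.fromRel fun p q =>
    (p.1 - q.1 = 1 ∧ p.2 = q.2) ∨ (p.1 = q.1 ∧ p.2 - q.2 = 1) ∨
    (p.1 - q.1 = 1 ∧ p.2 - q.2 = 1)

theorem apply_add_one_mod {α : Type*} {f : ℕ → α} {n : ℕ} (hn : 0 < n) (hf : f n = f 0)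
    (i : ℕ) : f ((i + 1) % n) = f (i % n + 1) := by
  rw [← Nat.mod_add_mod]
  have hle : i % n + 1 ≤ n := Nat.mod_lt i hn
  rcases hle.lt_or_eq with h | h
  · rw [Nat.mod_eq_of_lt h]
  · rw [h, Nat.mod_self, hf]

open Finset

namespace SimpleGraph

theorem card_filter_cliqueFinset_three_eq_ncard_commonNeighbors {α : Type*} [Fintype α]
    [DecidableEq α] (G : SimpleGraph α) [DecidableRel G.Adj] {u v : α} (huv : G.Adj u v) :
    #{f ∈ G.cliqueFinset 3 | u ∈ f ∧ v ∈ f} = (G.commonNeighbors u v).ncard := by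
  rw [Set.ncard_eq_toFinset_card']
  symm
  refine card_bij (fun w _ => {u, v, w}) (fun w hw => ?_) (fun w₁ hw₁ w₂ hw₂ h => ?_)
    (fun f hf => ?_)
  · simp only [Set.mem_toFinset, mem_commonNeighbors] at hw
    simp [is3Clique_triple_iff, huv, hw.1, hw.2]
  · simp only [Set.mem_toFinset, mem_commonNeighbors] at hw₁
    have : w₁ ∈ ({u, v, w₂} : Finset α) := h ▸ by simp
    simpa [hw₁.1.ne', hw₁.2.ne'] using this
  · obtain ⟨hf, hu, hv⟩ := mem_filter.1 hf
    rw [mem_cliqueFinset_iff] at hf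
    have huvf : {u, v} ⊆ f := insert_subset hu (singleton_subset_iff.2 hv)
    obtain ⟨w, hw⟩ : ∃ w, f \ {u, v} = {w} := card_eq_one.1 <| by
      rw [card_sdiff_of_subset huvf, hf.card_eq, card_pair huv.ne]
    have hwf : w ∈ f ∧ w ≠ u ∧ w ≠ v := by simpa using hw.ge (mem_singleton_self w)
    refine ⟨w, ?_, ?_⟩
    · simp only [Set.mem_toFinset, mem_commonNeighbors]
      exact ⟨hf.1 hu hwf.1 hwf.2.1.symm, hf.1 hv hwf.1 hwf.2.2.symm⟩
    · rw [← union_sdiff_of_subset huvf, hw, insert_union, singleton_union]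

theorem ncard_comap_commonNeighbors {α β : Type*} (G : SimpleGraph β) {f : α → β}
    (hf : f.Injective) (u v : α) :
    ((G.comap f).commonNeighbors u v).ncard =
      (G.commonNeighbors (f u) (f v) ∩ Set.range f).ncard := by
  rw [← Set.image_preimage_eq_inter_range, Set.ncard_image_of_injective _ hf]
  rfl

end SimpleGraph

theorem triLattice_adj_iff {p q : ℤ × ℤ} : TriLattice.Adj p q ↔
    (p.1 - q.1 = 1 ∧ p.2 = q.2) ∨ (p.1 - q.1 = -1 ∧ p.2 = q.2) ∨
    (p.1 = q.1 ∧ p.2 - q.2 = 1) ∨ (p.1 = q.1 ∧ p.2 - q.2 = -1) ∨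
    (p.1 - q.1 = 1 ∧ p.2 - q.2 = 1) ∨ (p.1 - q.1 = -1 ∧ p.2 - q.2 = -1) := by
  simp only [TriLattice, SimpleGraph.fromRel_adj, ne_eq, Prod.ext_iff]
  omega

theorem triLattice_neighborSet_eq (p : ℤ × ℤ) : TriLattice.neighborSet p =
    (({(1, 0), (-1, 0), (0, 1), (0, -1), (1, 1), (-1, -1)} : Finset (ℤ × ℤ)).image (p + ·) :
      Set (ℤ × ℤ)) := by
  ext q
  simp only [SimpleGraph.mem_neighborSet, triLattice_adj_iff, coe_image, Set.mem_image,
    mem_coe, mem_insert, mem_singleton]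
  constructor
  · intro h
    refine ⟨q - p, ?_, ?_⟩ <;>
      simp only [Prod.ext_iff, Prod.fst_sub, Prod.snd_sub, Prod.fst_add, Prod.snd_add] <;> omega
  · rintro ⟨d, hd, rfl⟩
    simp only [Prod.ext_iff, Prod.fst_add, Prod.snd_add] at hd ⊢
    omega

theorem ncard_triLattice_neighborSet (p : ℤ × ℤ) : (TriLattice.neighborSet p).ncard = 6 := by
  rw [triLattice_neighborSet_eq, Set.ncard_coe_finset,
    card_image_of_injective _ (add_right_injective p)]
  rfl

/-- The third vertex of the lattice triangle to the left of the directed edge `p → q`,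
namely `p + ρ (q - p)`, where `ρ (a, b) = (a - b, a)` is the rotation by `60°` in the basis
`(1, 0), (0, 1)` of the lattice (whose vectors make an angle of `120°`). -/
def latticeApex (p q : ℤ × ℤ) : ℤ × ℤ := (p.2 + q.1 - q.2, p.2 + q.1 - p.1)

theorem triLattice_commonNeighbors_eq {p q : ℤ × ℤ} (h : TriLattice.Adj p q) :
    TriLattice.commonNeighbors p q = {latticeApex p q, latticeApex q p} := by
  ext z
  rw [triLattice_adj_iff] at h
  simp only [SimpleGraph.mem_commonNeighbors, triLattice_adj_iff, latticeApex,
    Set.mem_insert_iff, Set.mem_singleton_iff, Prod.ext_iff]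
  rcases h with h | h | h | h | h | h <;> omega

theorem latticeApex_ne_latticeApex {p q : ℤ × ℤ} (h : TriLattice.Adj p q) :
    latticeApex p q ≠ latticeApex q p := by
  rw [triLattice_adj_iff] at h
  simp only [latticeApex, ne_eq, Prod.ext_iff]
  omega

/-- A finite region of the triangular lattice together with an `n`-periodic closed walk `bd`
tracing its boundary with the region on the left: the triangle on the left of each step lies in
the region, the one on its right does not. -/
structure LatticeRegion (n : ℕ) where
  carrier : Finset (ℤ × ℤ)
  bd : ℕ → ℤ × ℤ
  three_le : 3 ≤ n
  bd_periodic : Function.Periodic bd n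
  bd_injOn : Set.InjOn bd (Set.Iio n)
  bd_mem : ∀ i, bd i ∈ carrier
  bd_adj : ∀ i, TriLattice.Adj (bd i) (bd (i + 1))
  latticeApex_bd_mem : ∀ i, latticeApex (bd i) (bd (i + 1)) ∈ carrier
  latticeApex_bd_notMem : ∀ i, latticeApex (bd (i + 1)) (bd i) ∉ carrier
  exists_bd_of_latticeApex_notMem : ∀ p ∈ carrier, ∀ q ∈ carrier, TriLattice.Adj p q →
    latticeApex q p ∉ carrier → ∃ i, bd i = p ∧ bd (i + 1) = q
  neighborSet_subset : ∀ p ∈ carrier, p ∉ Set.range bd →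
    TriLattice.neighborSet p ⊆ carrier

namespace LatticeRegion

variable {n V : ℕ} (R : LatticeRegion n) (hV : #R.carrier = V)

noncomputable def embed (v : Fin V) : ℤ × ℤ := (R.carrier.equivFinOfCardEq hV).symm v

theorem embed_injective : (R.embed hV).Injective :=
  Subtype.val_injective.comp (R.carrier.equivFinOfCardEq hV).symm.injective

theorem embed_mem (v : Fin V) : R.embed hV v ∈ R.carrier :=
  ((R.carrier.equivFinOfCardEq hV).symm v).2

theorem range_embed : Set.range (R.embed hV) = R.carrier := by
  refine Set.Subset.antisymm (Set.range_subset_iff.2 (R.embed_mem hV)) fun p hp => ?_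
  exact ⟨R.carrier.equivFinOfCardEq hV ⟨p, hp⟩, by simp [embed]⟩

noncomputable def graph : SimpleGraph (Fin V) := TriLattice.comap (R.embed hV)

noncomputable def bdVertex (i : ℕ) : Fin V :=
  R.carrier.equivFinOfCardEq hV ⟨R.bd i, R.bd_mem i⟩

theorem embed_bdVertex (i : ℕ) : R.embed hV (R.bdVertex hV i) = R.bd i := by
  simp [embed, bdVertex]

theorem bdVertex_eq_iff {i : ℕ} {v : Fin V} :
    R.bdVertex hV i = v ↔ R.bd i = R.embed hV v := by
  rw [← (R.embed_injective hV).eq_iff, embed_bdVertex]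

theorem card_filter_cliqueFinset_three {u v : Fin V} (huv : (R.graph hV).Adj u v) :
    #{f ∈ (R.graph hV).cliqueFinset 3 | u ∈ f ∧ v ∈ f} =
      ({latticeApex (R.embed hV u) (R.embed hV v), latticeApex (R.embed hV v) (R.embed hV u)} ∩
        (R.carrier : Set (ℤ × ℤ))).ncard := by
  rw [SimpleGraph.card_filter_cliqueFinset_three_eq_ncard_commonNeighbors _ huv, graph,
    SimpleGraph.ncard_comap_commonNeighbors _ (R.embed_injective hV),
    triLattice_commonNeighbors_eq huv, range_embed]

theorem card_filter_cliqueFinset_three_of_isBoundaryEdge {u v : Fin V}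
    (huv : (R.graph hV).Adj u v)
    (hb : ∃ i, ({R.bdVertex hV i, R.bdVertex hV (i + 1)} : Finset (Fin V)) = {u, v}) :
    #{f ∈ (R.graph hV).cliqueFinset 3 | u ∈ f ∧ v ∈ f} = 1 := by
  obtain ⟨i, hi⟩ := hb
  have key : ({latticeApex (R.bd i) (R.bd (i + 1)), latticeApex (R.bd (i + 1)) (R.bd i)} ∩
      (R.carrier : Set (ℤ × ℤ))).ncard = 1 := by
    rw [Set.insert_inter_of_mem (R.latticeApex_bd_mem i),
      Set.singleton_inter_eq_empty.2 (R.latticeApex_bd_notMem i), LawfulSingleton.insert_empty_eq,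
      Set.ncard_singleton]
  have hi' : ({R.bdVertex hV i, R.bdVertex hV (i + 1)} : Set (Fin V)) = {u, v} := by
    simpa only [coe_pair] using congrArg ((↑) : Finset (Fin V) → Set (Fin V)) hi
  rw [card_filter_cliqueFinset_three _ _ huv]
  rcases Set.pair_eq_pair_iff.1 hi' with ⟨rfl, rfl⟩ | ⟨rfl, rfl⟩
  · simpa only [embed_bdVertex] using key
  · simpa only [embed_bdVertex, Set.pair_comm] using key

theorem card_filter_cliqueFinset_three_of_not_isBoundaryEdge {u v : Fin V}
    (huv : (R.graph hV).Adj u v)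
    (hb : ¬ ∃ i, ({R.bdVertex hV i, R.bdVertex hV (i + 1)} : Finset (Fin V)) = {u, v}) :
    #{f ∈ (R.graph hV).cliqueFinset 3 | u ∈ f ∧ v ∈ f} = 2 := by
  have latticeApex_mem : ∀ a b, (R.graph hV).Adj a b → ({a, b} : Finset (Fin V)) = {u, v} →
      latticeApex (R.embed hV b) (R.embed hV a) ∈ R.carrier := by
    intro a b hab hab_uv
    by_contra hout
    obtain ⟨i, hia, hib⟩ := R.exists_bd_of_latticeApex_notMem _ (R.embed_mem hV a) _
      (R.embed_mem hV b) hab hout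
    exact hb ⟨i, by rw [(R.bdVertex_eq_iff hV).2 hia, (R.bdVertex_eq_iff hV).2 hib, hab_uv]⟩
  have hsub : {latticeApex (R.embed hV u) (R.embed hV v), latticeApex (R.embed hV v) (R.embed hV u)}
      ⊆ (R.carrier : Set (ℤ × ℤ)) := Set.insert_subset_iff.2
    ⟨latticeApex_mem v u huv.symm (pair_comm v u),
      Set.singleton_subset_iff.2 (latticeApex_mem u v huv rfl)⟩
  rw [card_filter_cliqueFinset_three _ _ huv, Set.inter_eq_left.2 hsub,
    Set.ncard_pair (latticeApex_ne_latticeApex huv)]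

theorem embed_notMem_range_bd {v : Fin V} (hv : v ∉ (range n).image (R.bdVertex hV)) :
    R.embed hV v ∉ Set.range R.bd := by
  rintro ⟨i, hi⟩
  have hlt : i % n < n := Nat.mod_lt _ (by linarith [R.three_le])
  refine hv (mem_image.2 ⟨i % n, mem_range.2 hlt, ?_⟩)
  rw [bdVertex_eq_iff, R.bd_periodic.map_mod_nat, hi]

noncomputable def toDiscTriangulation : DiscTriangulation V n where
  hn := R.three_le
  hVn := by
    have h := card_le_card_of_injOn R.bd (fun i _ => R.bd_mem i) (coe_range n ▸ R.bd_injOn)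
    rwa [card_range, hV] at h
  G := R.graph hV
  bd := R.bdVertex hV
  bd_periodic i := by rw [bdVertex_eq_iff, embed_bdVertex, R.bd_periodic]
  bd_inj i hi j hj h := R.bd_injOn hi hj (by rwa [bdVertex_eq_iff, embed_bdVertex] at h)
  bd_adj i := by
    change TriLattice.Adj _ _
    rw [embed_bdVertex, embed_bdVertex]
    exact R.bd_adj i
  faces := (R.graph hV).cliqueFinset 3
  face_card f hf := ((R.graph hV).mem_cliqueFinset_iff.1 hf).card_eq
  face_clique f hf u hu v hv huv := ((R.graph hV).mem_cliqueFinset_iff.1 hf).1 hu hv huv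
  bedge_one _ _ := R.card_filter_cliqueFinset_three_of_isBoundaryEdge hV
  iedge_two _ _ := R.card_filter_cliqueFinset_three_of_not_isBoundaryEdge hV

theorem degree_toDiscTriangulation_of_internal {v : Fin V}
    (hv : (R.toDiscTriangulation hV).Internal v) : (R.toDiscTriangulation hV).degree v = 6 := by
  have hsub : TriLattice.neighborSet (R.embed hV v) ⊆ Set.range (R.embed hV) := by
    rw [range_embed]
    exact R.neighborSet_subset _ (R.embed_mem hV v) (R.embed_notMem_range_bd hV hv)
  change (R.embed hV ⁻¹' TriLattice.neighborSet (R.embed hV v)).ncard = 6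
  rw [Set.ncard_preimage_of_injective_subset_range (R.embed_injective hV) hsub,
    ncard_triLattice_neighborSet]

end LatticeRegion

section Hexagon

variable (k : ℕ)

noncomputable def hexagon : Finset (ℤ × ℤ) :=
  {p ∈ Icc ((k : ℤ), 0) (3 * k + 3, 2 * k + 2) | p.2 ≤ p.1 ∧ p.1 - p.2 ≤ 2 * k + 2}

def OnHexagonSide (p : ℤ × ℤ) : Prop :=
  p.1 = k ∨ p.1 = 3 * k + 3 ∨ p.2 = 0 ∨ p.2 = 2 * k + 2 ∨ p.2 = p.1 ∨
    p.1 - p.2 = 2 * k + 2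

/-- Walks counterclockwise around `hexagon k` from the corner `(k, 0)`, along sides of lengths
`k + 2, k + 1, k + 1, k + 1, k + 2, k`; it is back at `(k, 0)` at time `6 * k + 7`. -/
def hexagonWalk (j : ℕ) : ℤ × ℤ :=
  if j ≤ k + 2 then (k + j, 0)
  else if j ≤ 2 * k + 3 then (k + j, j - (k + 2))
  else if j ≤ 3 * k + 4 then (3 * k + 3, j - (k + 2))
  else if j ≤ 4 * k + 5 then (6 * k + 7 - j, 2 * k + 2)
  else if j ≤ 5 * k + 7 then (6 * k + 7 - j, 6 * k + 7 - j)
  else (k, 6 * k + 7 - j)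

def hexagonWalkIndex (p : ℤ × ℤ) : ℕ :=
  (if p.2 = 0 then p.1 - k
   else if p.1 - p.2 = 2 * k + 2 ∨ p.1 = 3 * k + 3 then k + 2 + p.2
   else if p.2 = 2 * k + 2 ∨ p.2 = p.1 then 6 * k + 7 - p.1
   else 6 * k + 7 - p.2).toNat

variable {k}

theorem mem_hexagon {p : ℤ × ℤ} : p ∈ hexagon k ↔ k ≤ p.1 ∧ p.1 ≤ 3 * k + 3 ∧
    0 ≤ p.2 ∧ p.2 ≤ 2 * k + 2 ∧ p.2 ≤ p.1 ∧ p.1 - p.2 ≤ 2 * k + 2 := by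
  simp only [hexagon, mem_filter, mem_Icc, Prod.le_def]
  omega

theorem hexagonWalk_mem_and_onHexagonSide {j : ℕ} (hj : j ≤ 6 * k + 7) :
    hexagonWalk k j ∈ hexagon k ∧ OnHexagonSide k (hexagonWalk k j) := by
  rw [mem_hexagon]
  unfold hexagonWalk OnHexagonSide
  split_ifs <;> omega

theorem hexagonWalkIndex_hexagonWalk {j : ℕ} (hj : j < 6 * k + 7) :
    hexagonWalkIndex k (hexagonWalk k j) = j := by
  unfold hexagonWalk hexagonWalkIndex
  split_ifs <;> omega

theorem hexagonWalk_hexagonWalkIndex {p : ℤ × ℤ} (hp : p ∈ hexagon k)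
    (hside : OnHexagonSide k p) :
    hexagonWalk k (hexagonWalkIndex k p) = p ∧ hexagonWalkIndex k p < 6 * k + 7 := by
  rw [mem_hexagon] at hp
  unfold OnHexagonSide at hside
  unfold hexagonWalk hexagonWalkIndex
  split_ifs <;> simp only [Prod.ext_iff] <;> omega

theorem hexagonWalk_period : hexagonWalk k (6 * k + 7) = hexagonWalk k 0 := by
  unfold hexagonWalk
  split_ifs <;> simp only [Prod.ext_iff] <;> omega

theorem triLattice_adj_hexagonWalk {j : ℕ} (hj : j < 6 * k + 7) :
    TriLattice.Adj (hexagonWalk k j) (hexagonWalk k (j + 1)) := by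
  rw [triLattice_adj_iff]
  unfold hexagonWalk
  split_ifs <;> omega

theorem latticeApex_hexagonWalk {j : ℕ} (hj : j < 6 * k + 7) :
    latticeApex (hexagonWalk k j) (hexagonWalk k (j + 1)) ∈ hexagon k ∧
      latticeApex (hexagonWalk k (j + 1)) (hexagonWalk k j) ∉ hexagon k := by
  rw [mem_hexagon, mem_hexagon]
  unfold hexagonWalk latticeApex
  split_ifs <;> omega

theorem neighborSet_subset_hexagon {p : ℤ × ℤ} (hp : p ∈ hexagon k)
    (hside : ¬ OnHexagonSide k p) : TriLattice.neighborSet p ⊆ hexagon k := by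
  intro q hq
  rw [SimpleGraph.mem_neighborSet, triLattice_adj_iff] at hq
  rw [mem_hexagon] at hp
  rw [mem_coe, mem_hexagon]
  unfold OnHexagonSide at hside
  omega

/-- By convexity, from a boundary point of `hexagon k` only one step has the outside on its
right. -/
theorem eq_of_latticeApex_notMem_hexagon {p q r : ℤ × ℤ} (hp : p ∈ hexagon k)
    (hq : q ∈ hexagon k) (hr : r ∈ hexagon k) (hpq : TriLattice.Adj p q)
    (hpr : TriLattice.Adj p r) (hqp : latticeApex q p ∉ hexagon k)
    (hrp : latticeApex r p ∉ hexagon k) : q = r := by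
  rw [mem_hexagon] at hp hq hr hqp hrp
  rw [triLattice_adj_iff] at hpq hpr
  unfold latticeApex at hqp hrp
  rw [Prod.ext_iff]
  rcases hpq with h | h | h | h | h | h <;> rcases hpr with h' | h' | h' | h' | h' | h' <;> omega

theorem exists_hexagonWalk_of_latticeApex_notMem {p q : ℤ × ℤ} (hp : p ∈ hexagon k)
    (hq : q ∈ hexagon k) (hpq : TriLattice.Adj p q) (hqp : latticeApex q p ∉ hexagon k) :
    ∃ j < 6 * k + 7, hexagonWalk k j = p ∧ hexagonWalk k (j + 1) = q := by
  have hside : OnHexagonSide k p := by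
    by_contra hside
    have hadj : TriLattice.Adj p (latticeApex q p) :=
      ((triLattice_commonNeighbors_eq hpq).ge (Set.mem_insert_of_mem _ rfl)).1
    exact hqp (neighborSet_subset_hexagon hp hside hadj)
  obtain ⟨hwalk, hlt⟩ := hexagonWalk_hexagonWalkIndex hp hside
  refine ⟨hexagonWalkIndex k p, hlt, hwalk, ?_⟩
  have hadj := triLattice_adj_hexagonWalk hlt
  rw [hwalk] at hadj
  refine eq_of_latticeApex_notMem_hexagon hp (hexagonWalk_mem_and_onHexagonSide hlt).1 hq hadj
    hpq ?_ hqp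
  simpa only [hwalk] using (latticeApex_hexagonWalk hlt).2

variable (k) in
theorem card_filter_onHexagonSide :
    #{p ∈ hexagon k | OnHexagonSide k p} = 6 * k + 7 := by
  rw [← card_range (6 * k + 7)]
  refine card_nbij' (hexagonWalkIndex k) (hexagonWalk k) (fun p hp => ?_) (fun j hj => ?_)
    (fun p hp => ?_) (fun j hj => ?_)
  · rw [coe_filter] at hp
    simpa using (hexagonWalk_hexagonWalkIndex hp.1 hp.2).2
  · rw [coe_range, Set.mem_Iio] at hj
    simpa using hexagonWalk_mem_and_onHexagonSide hj.le
  · rw [coe_filter] at hp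
    exact (hexagonWalk_hexagonWalkIndex hp.1 hp.2).1
  · rw [coe_range, Set.mem_Iio] at hj
    exact hexagonWalkIndex_hexagonWalk hj

variable (k) in
theorem image_add_hexagon :
    (hexagon k).image (· + (2, 1)) = {p ∈ hexagon (k + 1) | ¬ OnHexagonSide (k + 1) p} := by
  ext p
  rw [mem_image, mem_filter]
  simp only [mem_hexagon, OnHexagonSide]
  constructor
  · rintro ⟨q, hq, rfl⟩
    simp only [Prod.fst_add, Prod.snd_add]
    push_cast
    omega
  · intro hp
    refine ⟨p - (2, 1), ?_, sub_add_cancel p _⟩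
    simp only [Prod.fst_sub, Prod.snd_sub]
    push_cast at hp
    omega

variable (k) in
theorem card_hexagon : #(hexagon k) = 3 * k ^ 2 + 10 * k + 8 := by
  induction k with
  | zero => decide
  | succ k ih =>
    rw [← card_filter_add_card_filter_not (OnHexagonSide (k + 1)), card_filter_onHexagonSide,
      ← image_add_hexagon, card_image_of_injective _ (add_left_injective _), ih]
    ring

end Hexagon

noncomputable def hexagonRegion (k : ℕ) : LatticeRegion (6 * k + 7) where
  carrier := hexagon k
  bd i := hexagonWalk k (i % (6 * k + 7))
  three_le := by omega
  bd_periodic i := by simp only [Nat.add_mod_right]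
  bd_injOn i hi j hj h := by
    rw [Set.mem_Iio] at hi hj
    simp only [Nat.mod_eq_of_lt hi, Nat.mod_eq_of_lt hj] at h
    rw [← hexagonWalkIndex_hexagonWalk hi, h, hexagonWalkIndex_hexagonWalk hj]
  bd_mem i := (hexagonWalk_mem_and_onHexagonSide (Nat.mod_lt i (by omega)).le).1
  bd_adj i := by
    rw [apply_add_one_mod (by omega) hexagonWalk_period]
    exact triLattice_adj_hexagonWalk (Nat.mod_lt i (by omega))
  latticeApex_bd_mem i := by
    rw [apply_add_one_mod (by omega) hexagonWalk_period]
    exact (latticeApex_hexagonWalk (Nat.mod_lt i (by omega))).1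
  latticeApex_bd_notMem i := by
    rw [apply_add_one_mod (by omega) hexagonWalk_period]
    exact (latticeApex_hexagonWalk (Nat.mod_lt i (by omega))).2
  exists_bd_of_latticeApex_notMem p hp q hq hpq hqp := by
    obtain ⟨j, hj, rfl, rfl⟩ := exists_hexagonWalk_of_latticeApex_notMem hp hq hpq hqp
    refine ⟨j, ?_, ?_⟩
    · rw [Nat.mod_eq_of_lt hj]
    · rw [apply_add_one_mod (by omega) hexagonWalk_period, Nat.mod_eq_of_lt hj]
  neighborSet_subset p hp hbd := by
    refine neighborSet_subset_hexagon hp fun hside => hbd ⟨hexagonWalkIndex k p, ?_⟩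
    obtain ⟨hwalk, hlt⟩ := hexagonWalk_hexagonWalkIndex hp hside
    simp only [Nat.mod_eq_of_lt hlt, hwalk]

/-- tightness. For every `n ≥ 3` with `n ≡ 1 (mod 6)`,
i.e. `n = 6k + 7`, there is a disc triangulation (a convex hexagon in the
triangular lattice) with `n` boundary vertices, exactly `⌊(n+3)²/12⌋`
vertices, all internal degrees equal to 6, which embeds into the triangular
lattice. -/
theorem hexagon_achieves_bound (k n : ℕ) (hn : n = 6 * k + 7) :
    ∃ T : DiscTriangulation ((n + 3) ^ 2 / 12) n,
      (∀ v, T.Internal v → T.degree v = 6) ∧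
      ∃ φ : Fin ((n + 3) ^ 2 / 12) → ℤ × ℤ, Function.Injective φ ∧
        ∀ u v, T.G.Adj u v → TriLattice.Adj (φ u) (φ v) := by
  subst hn
  have hV : #(hexagonRegion k).carrier = (6 * k + 7 + 3) ^ 2 / 12 := by
    have h : (6 * k + 7 + 3) ^ 2 = 12 * (3 * k ^ 2 + 10 * k + 8) + 4 := by ring
    rw [h, hexagonRegion, card_hexagon]
    omega
  exact ⟨(hexagonRegion k).toDiscTriangulation hV,
    fun _ => (hexagonRegion k).degree_toDiscTriangulation_of_internal hV,
    (hexagonRegion k).embed hV, (hexagonRegion k).embed_injective hV, fun _ _ h => h⟩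
end

section
/- If δ ≥ 7, the sequence S_R of boundary sizes of balls in the δ-regular plane triangulation grows exponentially: there exist c > 1 and a > 0 with S_R ≥ a·c^R for all R ≥ 1. -/
/-- The pair `(V_R, S_R)` of the volume and boundary size of the ball of
radius `R` in the `δ`-regular plane triangulation, defined by the recursions
`V_0 = S_0 = 1`, `S_{R+1} = S_R + 6 + (δ - 6) V_R`, `V_{R+1} = V_R + S_{R+1}`. -/
def ballVS (δ : ℕ) : ℕ → ℕ × ℕ
  | 0 => (1, 1)
  | R + 1 =>
    let p := ballVS δ R
    let S' := p.2 + 6 + (δ - 6) * p.1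
    (p.1 + S', S')

/-- `V_R`, the volume of the ball of radius `R` in the `δ`-regular
triangulation. -/
def ballV (δ R : ℕ) : ℕ := (ballVS δ R).1

/-- `S_R`, the boundary size of the ball of radius `R` in the `δ`-regular
triangulation. -/
def ballS (δ R : ℕ) : ℕ := (ballVS δ R).2

/-!
Since `S_R ≤ V_R`, the recursion gives `S_{R+1} = S_R + 6 + (δ - 6) V_R ≥ (δ - 5) S_R`, hence
`S_R ≥ (δ - 5)^R`, and `δ - 5 ≥ 2` once `δ ≥ 7`.
-/

theorem ballS_succ (δ R : ℕ) : ballS δ (R + 1) = ballS δ R + 6 + (δ - 6) * ballV δ R := rfl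

theorem ballV_succ (δ R : ℕ) : ballV δ (R + 1) = ballV δ R + ballS δ (R + 1) := rfl

theorem ballS_le_ballV (δ R : ℕ) : ballS δ R ≤ ballV δ R := by
  cases R with
  | zero => rfl
  | succ R => rw [ballV_succ]; exact Nat.le_add_left _ _

theorem sub_five_mul_ballS_le_ballS_succ (δ R : ℕ) : (δ - 5) * ballS δ R ≤ ballS δ (R + 1) :=
  calc (δ - 5) * ballS δ R ≤ (1 + (δ - 6)) * ballS δ R := Nat.mul_le_mul_right _ (by omega)
    _ = ballS δ R + (δ - 6) * ballS δ R := by ring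
    _ ≤ ballS δ R + (δ - 6) * ballV δ R := by gcongr; exact ballS_le_ballV δ R
    _ ≤ ballS δ (R + 1) := by rw [ballS_succ]; omega

theorem sub_five_pow_le_ballS (δ R : ℕ) : (δ - 5) ^ R ≤ ballS δ R := by
  induction R with
  | zero => exact le_refl 1
  | succ R ih =>
    calc (δ - 5) ^ (R + 1) = (δ - 5) * (δ - 5) ^ R := pow_succ' _ _
      _ ≤ (δ - 5) * ballS δ R := Nat.mul_le_mul_left _ ih
      _ ≤ ballS δ (R + 1) := sub_five_mul_ballS_le_ballS_succ δ R

/-- For `δ ≥ 7`, the boundary sizes `S_R` of balls in the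
`δ`-regular plane triangulation grow exponentially: there are `c > 1` and
`a > 0` with `S_R ≥ a · c^R` for all `R ≥ 1`. -/
theorem hyperbolic_ball_exponential_growth (δ : ℕ) (hδ : 7 ≤ δ) :
    ∃ c : ℝ, 1 < c ∧ ∃ a : ℝ, 0 < a ∧
      ∀ R : ℕ, 1 ≤ R → (ballS δ R : ℝ) ≥ a * c ^ R := by
  refine ⟨((δ - 5 : ℕ) : ℝ), by exact_mod_cast (by omega : 1 < δ - 5), 1, one_pos, fun R _ => ?_⟩
  rw [one_mul, ge_iff_le]
  exact_mod_cast sub_five_pow_le_ballS δ R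
end
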